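/- Let Y = (ℤ/p^m) ×_{(ℤ/p^m)^×} G, where G = (ℤ/nℤ) × (ℤ/p^mℤ)^× acts by multiplication through its second factor on ℤ/p^m and by translation on itself. Then |Y| = ∑_{k=0}^{m} |G| / |ker((ℤ/p^mℤ)^× → (ℤ/p^{m−k}ℤ)^×)|, i.e. |Y| = ∑_{k=0}^m n · φ(p^{m−k}), where φ is Euler's totient (with φ(1)=1). -/
import Mathlib


/-- The balanced product `Y = (ℤ/p^m) ×_{(ℤ/p^m)^×} G` for
`G = (ℤ/n) × (ℤ/p^m)^×`: the quotient of `(ℤ/p^m) × G` identifying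
`(a·u, g)` with `(a, (g₁, u·g₂))` for units `u`. -/
def Ybal (p n m : ℕ) : Type :=
  Quot (fun x y : ZMod (p ^ m) × (ZMod n × (ZMod (p ^ m))ˣ) =>
    ∃ u : (ZMod (p ^ m))ˣ, y.1 = x.1 * u ∧ y.2 = (x.2.1, x.2.2 * u⁻¹))

/-- `Ybal p n m` is in bijection with `ZMod (p^m) × ZMod n` via
`(a, (g₁, g₂)) ↦ (a·g₂, g₁)`. -/
noncomputable def YbalEquiv (p n m : ℕ) : Ybal p n m ≃ ZMod (p ^ m) × ZMod n where
  toFun := Quot.lift (fun x => (x.1 * (x.2.2 : ZMod (p ^ m)), x.2.1)) (by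
    rintro ⟨a, g₁, g₂⟩ ⟨b, h₁, h₂⟩ ⟨u, hu1, hu2⟩
    simp only [Prod.mk.injEq] at hu2 ⊢
    obtain ⟨rfl, rfl⟩ := hu2
    refine ⟨?_, rfl⟩
    subst hu1
    push_cast
    ring_nf
    rw [mul_assoc, mul_comm (u : ZMod (p ^ m)), mul_assoc, Units.inv_mul, mul_one])
  invFun b := Quot.mk _ (b.1, (b.2, 1))
  left_inv := by
    rintro ⟨a, g₁, g₂⟩
    apply Quot.sound
    exact ⟨g₂⁻¹, by rw [mul_assoc]; simp, by simp⟩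
  right_inv := by rintro ⟨b, c⟩; simp

lemma sum_totient_prime_pow (p : ℕ) (hp : p.Prime) (m : ℕ) :
    ∑ k ∈ Finset.range (m + 1), Nat.totient (p ^ k) = p ^ m := by
  induction m with
  | zero => simp
  | succ m ih =>
    rw [Finset.sum_range_succ, ih, Nat.totient_prime_pow hp (Nat.succ_pos m),
      Nat.succ_sub_one, pow_succ]
    have h1 : p ^ m * (p - 1) = p ^ m * p - p ^ m := by rw [Nat.mul_sub, mul_one]
    have h2 : p ^ m ≤ p ^ m * p := Nat.le_mul_of_pos_right _ hp.pos
    omega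

/-- Orbit decomposition of the balanced product: for `p` prime and `n, m ≥ 1`,
`|Y| = ∑_{k=0}^{m} n · φ(p^{m−k})`, corresponding to the decomposition of
`Y_{n,m}` into `m+1` orbits of sizes `|G_{n,m−k}|`. -/
theorem stmt_11 (p n m : ℕ) (hp : p.Prime) (hn : 1 ≤ n) (hm : 1 ≤ m) :
    Nat.card (Ybal p n m)
      = ∑ k ∈ Finset.range (m + 1), n * Nat.totient (p ^ (m - k)) := by
  rw [Nat.card_congr (YbalEquiv p n m), Nat.card_prod, Nat.card_zmod, Nat.card_zmod,
    ← Finset.mul_sum]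
  rw [show (∑ k ∈ Finset.range (m + 1), Nat.totient (p ^ (m - k)))
      = ∑ k ∈ Finset.range (m + 1), Nat.totient (p ^ k) by
    simpa using Finset.sum_range_reflect (fun j => Nat.totient (p ^ j)) (m + 1),
    sum_totient_prime_pow p hp m, mul_comm]
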